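/- arXiv:1409.3600 — 2 statements merged into one kernel-verified Lean document; each statement's English description precedes it below -/
import Mathlib

section
/- (Pivot quality for the repeated step algorithm with groups of 3.) Let j ∈ ℕ and k = 2j + 1, and let S be a finite set of 9k distinct real numbers. Suppose S is partitioned into 3k pairwise disjoint groups of 3 elements each; let mᵢ (1 ≤ i ≤ 3k) be the median (2nd smallest element) of the i-th group, and suppose the set M = {m₁, …, m_{3k}} is partitioned into k pairwise disjoint groups of 3 elements each, with M' the set of the k medians (2nd smallest elements) of these groups. Let m be the median ((j+1)-th smallest element) of M'. Then |{x ∈ S : x ≤ m}| ≥ 4(j+1) and |{x ∈ S : x ≥ m}| ≥ 4(j+1). In particular, at least 2·|S|/9 elements of S are ≤ m and at least 2·|S|/9 are ≥ m. -/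
/-- The `j`-th smallest element (0-indexed) of a finite set of reals. -/
noncomputable def kthSmallest (s : Finset ℝ) (j : ℕ) : ℝ :=
  (s.sort (· ≤ ·)).getD j 0

lemma kthSmallest_eq_orderEmb (s : Finset ℝ) (i : ℕ) (hi : i < s.card) :
    kthSmallest s i = s.orderEmbOfFin rfl ⟨i, hi⟩ := by
  have h2 : i < (s.sort (· ≤ ·)).length := by rw [Finset.length_sort]; exact hi
  rw [Finset.orderEmbOfFin_apply, kthSmallest, List.getD_eq_getElem _ _ h2]
  rfl

lemma kthSmallest_mem (s : Finset ℝ) (i : ℕ) (hi : i < s.card) :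
    kthSmallest s i ∈ s := by
  rw [kthSmallest_eq_orderEmb s i hi]
  exact Finset.orderEmbOfFin_mem _ _ _

lemma le_card_filter_le (s : Finset ℝ) (i : ℕ) (hi : i < s.card) :
    i + 1 ≤ (s.filter (fun x => x ≤ kthSmallest s i)).card := by
  classical
  set e := s.orderEmbOfFin rfl with he
  have hsub : (Finset.Iic (⟨i, hi⟩ : Fin s.card)).image e ⊆
      s.filter (fun x => x ≤ kthSmallest s i) := by
    intro x hx
    simp only [Finset.mem_image, Finset.mem_Iic] at hx
    obtain ⟨n, hn, rfl⟩ := hx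
    rw [Finset.mem_filter]
    refine ⟨Finset.orderEmbOfFin_mem _ _ _, ?_⟩
    rw [kthSmallest_eq_orderEmb s i hi]
    exact e.monotone hn
  calc i + 1 = (Finset.Iic (⟨i, hi⟩ : Fin s.card)).card := by rw [Fin.card_Iic]
    _ = ((Finset.Iic (⟨i, hi⟩ : Fin s.card)).image e).card :=
        (Finset.card_image_of_injective _ e.injective).symm
    _ ≤ _ := Finset.card_le_card hsub

lemma le_card_filter_ge (s : Finset ℝ) (i : ℕ) (hi : i < s.card) :
    s.card - i ≤ (s.filter (fun x => kthSmallest s i ≤ x)).card := by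
  classical
  set e := s.orderEmbOfFin rfl with he
  have hsub : (Finset.Ici (⟨i, hi⟩ : Fin s.card)).image e ⊆
      s.filter (fun x => kthSmallest s i ≤ x) := by
    intro x hx
    simp only [Finset.mem_image, Finset.mem_Ici] at hx
    obtain ⟨n, hn, rfl⟩ := hx
    rw [Finset.mem_filter]
    refine ⟨Finset.orderEmbOfFin_mem _ _ _, ?_⟩
    rw [kthSmallest_eq_orderEmb s i hi]
    exact e.monotone hn
  calc s.card - i = (Finset.Ici (⟨i, hi⟩ : Fin s.card)).card := by rw [Fin.card_Ici]
    _ = ((Finset.Ici (⟨i, hi⟩ : Fin s.card)).image e).card :=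
        (Finset.card_image_of_injective _ e.injective).symm
    _ ≤ _ := Finset.card_le_card hsub

/-- One level of the medians argument. -/
lemma level_step {n : ℕ} (F : Fin n → Finset ℝ)
    (hdisj : ∀ i i' : Fin n, i ≠ i' → Disjoint (F i) (F i'))
    (hcard : ∀ i, (F i).card = 3)
    (p : ℝ → Prop) [DecidablePred p]
    (h2 : ∀ i, p (kthSmallest (F i) 1) → 2 ≤ ((F i).filter p).card) :
    2 * (((Finset.univ.image (fun i => kthSmallest (F i) 1)).filter p).card)
      ≤ ((Finset.univ.biUnion F).filter p).card := by
  classical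
  set med : Fin n → ℝ := fun i => kthSmallest (F i) 1 with hmed
  have hmem : ∀ i, med i ∈ F i := fun i =>
    kthSmallest_mem (F i) 1 (by rw [hcard i]; norm_num)
  have hinj : Function.Injective med := by
    intro i i' h
    by_contra hne
    exact Finset.disjoint_left.mp (hdisj i i' hne) (hmem i) (h ▸ hmem i')
  set I : Finset (Fin n) := Finset.univ.filter (fun i => p (med i)) with hI
  have hcardI : ((Finset.univ.image med).filter p).card = I.card := by
    rw [Finset.filter_image, Finset.card_image_of_injective _ hinj]
  rw [hcardI]
  have hsub : I.biUnion (fun i => (F i).filter p) ⊆ (Finset.univ.biUnion F).filter p := by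
    intro x hx
    simp only [Finset.mem_biUnion, Finset.mem_filter] at hx ⊢
    obtain ⟨i, _, hxi, hpx⟩ := hx
    exact ⟨⟨i, Finset.mem_univ i, hxi⟩, hpx⟩
  have hdisj' : ∀ i ∈ I, ∀ i' ∈ I, i ≠ i' →
      Disjoint ((F i).filter p) ((F i').filter p) := fun i _ i' _ hne =>
    Disjoint.mono (Finset.filter_subset _ _) (Finset.filter_subset _ _) (hdisj i i' hne)
  calc 2 * I.card = ∑ _i ∈ I, 2 := by rw [Finset.sum_const, smul_eq_mul, mul_comm]
    _ ≤ ∑ i ∈ I, ((F i).filter p).card := by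
        refine Finset.sum_le_sum fun i hi => h2 i ?_
        exact (Finset.mem_filter.mp hi).2
    _ = (I.biUnion (fun i => (F i).filter p)).card := (Finset.card_biUnion hdisj').symm
    _ ≤ _ := Finset.card_le_card hsub

/-- Pivot quality for the repeated step algorithm with groups of 3:
the median `m` of the medians of medians is `≤` at least `4(j+1)` elements
of `S` and `≥` at least `4(j+1)` elements of `S`. -/
theorem pivot_quality_repeated3 (j : ℕ) (k : ℕ) (hk : k = 2 * j + 1)
    (S : Finset ℝ) (hS : S.card = 9 * k)
    (G : Fin (3 * k) → Finset ℝ)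
    (hGdisj : ∀ i i' : Fin (3 * k), i ≠ i' → Disjoint (G i) (G i'))
    (hGunion : Finset.univ.biUnion G = S)
    (hGcard : ∀ i, (G i).card = 3)
    (M : Finset ℝ) (hM : M = Finset.image (fun i => kthSmallest (G i) 1) Finset.univ)
    (H : Fin k → Finset ℝ)
    (hHdisj : ∀ i i' : Fin k, i ≠ i' → Disjoint (H i) (H i'))
    (hHunion : Finset.univ.biUnion H = M)
    (hHcard : ∀ i, (H i).card = 3)
    (M' : Finset ℝ) (hM' : M' = Finset.image (fun i => kthSmallest (H i) 1) Finset.univ)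
    (m : ℝ) (hm : m = kthSmallest M' j) :
    4 * (j + 1) ≤ (S.filter (fun x => x ≤ m)).card ∧
    4 * (j + 1) ≤ (S.filter (fun x => m ≤ x)).card := by
  classical
  -- cardinality of M'
  have hmedH_mem : ∀ i, kthSmallest (H i) 1 ∈ H i := fun i =>
    kthSmallest_mem (H i) 1 (by rw [hHcard i]; norm_num)
  have hinjH : Function.Injective (fun i => kthSmallest (H i) 1) := by
    intro i i' h
    simp only at h
    by_contra hne
    exact Finset.disjoint_left.mp (hHdisj i i' hne) (hmedH_mem i)
      (by rw [h]; exact hmedH_mem i')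
  have hM'card : M'.card = k := by
    rw [hM', Finset.card_image_of_injective _ hinjH, Finset.card_univ, Fintype.card_fin]
  have hj : j < M'.card := by rw [hM'card, hk]; omega
  constructor
  · -- lower side
    have h1 : j + 1 ≤ (M'.filter (fun x => x ≤ m)).card := by
      have := le_card_filter_le M' j hj
      rw [← hm] at this; exact this
    have h2 : 2 * (j + 1) ≤ (M.filter (fun x => x ≤ m)).card := by
      rw [← hHunion]
      calc 2 * (j + 1) ≤ 2 * (M'.filter (fun x => x ≤ m)).card := by omega
        _ ≤ _ := by
            rw [hM']
            refine level_step H hHdisj hHcard (fun x => x ≤ m) (fun i hi => ?_)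
            have hlt : (1 : ℕ) < (H i).card := by rw [hHcard i]; norm_num
            have := le_card_filter_le (H i) 1 hlt
            refine le_trans this (Finset.card_le_card ?_)
            intro x hx
            rw [Finset.mem_filter] at hx ⊢
            exact ⟨hx.1, le_trans hx.2 hi⟩
    have h3 : 2 * (M.filter (fun x => x ≤ m)).card ≤ (S.filter (fun x => x ≤ m)).card := by
      rw [← hGunion, hM]
      refine level_step G hGdisj hGcard (fun x => x ≤ m) (fun i hi => ?_)
      have hlt : (1 : ℕ) < (G i).card := by rw [hGcard i]; norm_num
      have := le_card_filter_le (G i) 1 hlt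
      refine le_trans this (Finset.card_le_card ?_)
      intro x hx
      rw [Finset.mem_filter] at hx ⊢
      exact ⟨hx.1, le_trans hx.2 hi⟩
    omega
  · -- upper side
    have h1 : j + 1 ≤ (M'.filter (fun x => m ≤ x)).card := by
      have := le_card_filter_ge M' j hj
      rw [← hm] at this
      refine le_trans ?_ this
      rw [hM'card, hk]; omega
    have h2 : 2 * (j + 1) ≤ (M.filter (fun x => m ≤ x)).card := by
      rw [← hHunion]
      calc 2 * (j + 1) ≤ 2 * (M'.filter (fun x => m ≤ x)).card := by omega
        _ ≤ _ := by
            rw [hM']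
            refine level_step H hHdisj hHcard (fun x => m ≤ x) (fun i hi => ?_)
            have hlt : (1 : ℕ) < (H i).card := by rw [hHcard i]; norm_num
            have h' := le_card_filter_ge (H i) 1 hlt
            rw [hHcard i] at h'
            refine le_trans h' (Finset.card_le_card ?_)
            intro x hx
            rw [Finset.mem_filter] at hx ⊢
            exact ⟨hx.1, le_trans hi hx.2⟩
    have h3 : 2 * (M.filter (fun x => m ≤ x)).card ≤ (S.filter (fun x => m ≤ x)).card := by
      rw [← hGunion, hM]
      refine level_step G hGdisj hGcard (fun x => m ≤ x) (fun i hi => ?_)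
      have hlt : (1 : ℕ) < (G i).card := by rw [hGcard i]; norm_num
      have h' := le_card_filter_ge (G i) 1 hlt
      rw [hGcard i] at h'
      refine le_trans h' (Finset.card_le_card ?_)
      intro x hx
      rw [Finset.mem_filter] at hx ⊢
      exact ⟨hx.1, le_trans hi hx.2⟩
    omega
end

section
/- (Pivot quality for the combined repeated-step algorithm with groups of 4, lower medians then upper medians.) Let j ∈ ℕ and k = 2j + 1, and let S be a finite set of 16k distinct real numbers. Suppose S is partitioned into 4k pairwise disjoint groups of 4 elements each; let mᵢ (1 ≤ i ≤ 4k) be the lower median (2nd smallest element) of the i-th group, and suppose the set M = {m₁, …, m_{4k}} is partitioned into k pairwise disjoint groups of 4 elements each, with M' the set of the k upper medians (3rd smallest elements) of these groups. Let m be the median ((j+1)-th smallest element) of M'. Then |{x ∈ S : x ≤ m}| ≥ 6(j+1) and |{x ∈ S : x ≥ m}| ≥ 6(j+1). In particular, at least 3·|S|/16 elements of S are ≤ m and at least 3·|S|/16 are ≥ m. -/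
/-! Of the `2j + 1` upper medians in `M'`, at least `j + 1` are `≤ m`; each is `≥` three elements
of its group in `M`, and each of these `3(j + 1)` lower medians is `≥` two elements of its group
in `S`. Symmetrically, at least `j + 1` upper medians are `≥ m`, each `≤` two elements of its group,
and each of these `2(j + 1)` lower medians is `≤` three elements of its group. Since the groups are
pairwise disjoint, distinct medians are distinct elements, so no element is counted twice. -/

open Finset Function

theorem kthSmallest_eq_orderEmbOfFin (s : Finset ℝ) {t : ℕ} (ht : t < #s) :
    kthSmallest s t = s.orderEmbOfFin rfl ⟨t, ht⟩ := by
  simp [kthSmallest, orderEmbOfFin_apply, ht]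

theorem kthSmallest_mem_s13 (s : Finset ℝ) {t : ℕ} (ht : t < #s) : kthSmallest s t ∈ s := by
  rw [kthSmallest_eq_orderEmbOfFin s ht]
  exact orderEmbOfFin_mem _ _ _

theorem le_card_filter_le_of_kthSmallest_le {s : Finset ℝ} {t : ℕ} (ht : t < #s) {m : ℝ}
    (hm : kthSmallest s t ≤ m) : t + 1 ≤ #{x ∈ s | x ≤ m} := by
  rw [kthSmallest_eq_orderEmbOfFin s ht] at hm
  set e := s.orderEmbOfFin rfl
  calc t + 1 = #((Iic (⟨t, ht⟩ : Fin #s)).map e.toEmbedding) := by rw [card_map, Fin.card_Iic]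
    _ ≤ #{x ∈ s | x ≤ m} := card_le_card fun x hx => by
      obtain ⟨i, hi, rfl⟩ := mem_map.1 hx
      exact mem_filter.2 ⟨orderEmbOfFin_mem _ _ _, (e.monotone (mem_Iic.1 hi)).trans hm⟩

theorem card_sub_le_card_filter_ge_of_le_kthSmallest {s : Finset ℝ} {t : ℕ} (ht : t < #s) {m : ℝ}
    (hm : m ≤ kthSmallest s t) : #s - t ≤ #{x ∈ s | m ≤ x} := by
  rw [kthSmallest_eq_orderEmbOfFin s ht] at hm
  set e := s.orderEmbOfFin rfl
  calc #s - t = #((Ici (⟨t, ht⟩ : Fin #s)).map e.toEmbedding) := by rw [card_map, Fin.card_Ici]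
    _ ≤ #{x ∈ s | m ≤ x} := card_le_card fun x hx => by
      obtain ⟨i, hi, rfl⟩ := mem_map.1 hx
      exact mem_filter.2 ⟨orderEmbOfFin_mem _ _ _, hm.trans (e.monotone (mem_Ici.1 hi))⟩

section Groups

variable {ι : Type*} {F : ι → Finset ℝ} {t : ℕ}

theorem kthSmallest_injective (hF : Pairwise (Disjoint on F)) (ht : ∀ i, t < #(F i)) :
    Function.Injective fun i => kthSmallest (F i) t := by
  intro i i' (h : kthSmallest (F i) t = kthSmallest (F i') t)
  by_contra hne
  exact disjoint_left.1 (hF hne) (kthSmallest_mem_s13 _ (ht i)) (h ▸ kthSmallest_mem_s13 _ (ht i'))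

theorem card_image_kthSmallest [Fintype ι] (hF : Pairwise (Disjoint on F)) (ht : ∀ i, t < #(F i)) :
    #(univ.image fun i => kthSmallest (F i) t) = Fintype.card ι := by
  rw [card_image_of_injective _ (kthSmallest_injective hF ht), card_univ]

theorem mul_card_filter_image_kthSmallest_le [Fintype ι] (hF : Pairwise (Disjoint on F))
    (ht : ∀ i, t < #(F i)) (p : ℝ → Prop) [DecidablePred p] {c : ℕ}
    (hc : ∀ i, p (kthSmallest (F i) t) → c ≤ #{x ∈ F i | p x}) :
    c * #{x ∈ univ.image (fun i => kthSmallest (F i) t) | p x} ≤ #{x ∈ univ.biUnion F | p x} := by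
  rw [filter_image, card_image_of_injective _ (kthSmallest_injective hF ht), filter_biUnion,
    card_biUnion fun i _ i' _ h => disjoint_filter_filter (hF h), mul_comm, ← smul_eq_mul]
  calc #{i | p (kthSmallest (F i) t)} • c
      ≤ ∑ i ∈ {i | p (kthSmallest (F i) t)}, #{x ∈ F i | p x} :=
        card_nsmul_le_sum _ _ _ fun i hi => hc i (mem_filter.1 hi).2
    _ ≤ ∑ i, #{x ∈ F i | p x} := sum_le_sum_of_subset (filter_subset _ _)

end Groups

theorem pivot_quality_repeated4_general (j : ℕ) (k : ℕ) (hk : k = 2 * j + 1)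
    (S : Finset ℝ)
    (G : Fin (4 * k) → Finset ℝ)
    (hGdisj : ∀ i i' : Fin (4 * k), i ≠ i' → Disjoint (G i) (G i'))
    (hGunion : Finset.univ.biUnion G = S)
    (hGcard : ∀ i, (G i).card = 4)
    (M : Finset ℝ) (hM : M = Finset.image (fun i => kthSmallest (G i) 1) Finset.univ)
    (H : Fin k → Finset ℝ)
    (hHdisj : ∀ i i' : Fin k, i ≠ i' → Disjoint (H i) (H i'))
    (hHunion : Finset.univ.biUnion H = M)
    (hHcard : ∀ i, (H i).card = 4)
    (M' : Finset ℝ) (hM' : M' = Finset.image (fun i => kthSmallest (H i) 2) Finset.univ)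
    (m : ℝ) (hm : m = kthSmallest M' j) :
    6 * (j + 1) ≤ (S.filter (fun x => x ≤ m)).card ∧
    6 * (j + 1) ≤ (S.filter (fun x => m ≤ x)).card := by
  have hG : ∀ i, 1 < #(G i) := fun i => by rw [hGcard]; decide
  have hH : ∀ i, 2 < #(H i) := fun i => by rw [hHcard]; decide
  have hM'card : #M' = 2 * j + 1 := by
    rw [hM', card_image_kthSmallest hHdisj hH, Fintype.card_fin, hk]
  have le_M' : j + 1 ≤ #{x ∈ M' | x ≤ m} :=
    le_card_filter_le_of_kthSmallest_le (by omega) hm.ge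
  have ge_M' : j + 1 ≤ #{x ∈ M' | m ≤ x} := by
    have := card_sub_le_card_filter_ge_of_le_kthSmallest (s := M') (by omega) hm.le
    omega
  have le_M : 3 * #{x ∈ M' | x ≤ m} ≤ #{x ∈ M | x ≤ m} := by
    rw [hM', ← hHunion]
    exact mul_card_filter_image_kthSmallest_le hHdisj hH _ fun i hi =>
      le_card_filter_le_of_kthSmallest_le (hH i) hi
  have ge_M : 2 * #{x ∈ M' | m ≤ x} ≤ #{x ∈ M | m ≤ x} := by
    rw [hM', ← hHunion]
    exact mul_card_filter_image_kthSmallest_le hHdisj hH _ fun i hi => by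
      simpa [hHcard] using card_sub_le_card_filter_ge_of_le_kthSmallest (hH i) hi
  have le_S : 2 * #{x ∈ M | x ≤ m} ≤ #{x ∈ S | x ≤ m} := by
    rw [hM, ← hGunion]
    exact mul_card_filter_image_kthSmallest_le hGdisj hG _ fun i hi =>
      le_card_filter_le_of_kthSmallest_le (hG i) hi
  have ge_S : 3 * #{x ∈ M | m ≤ x} ≤ #{x ∈ S | m ≤ x} := by
    rw [hM, ← hGunion]
    exact mul_card_filter_image_kthSmallest_le hGdisj hG _ fun i hi => by
      simpa [hGcard] using card_sub_le_card_filter_ge_of_le_kthSmallest (hG i) hi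
  constructor <;> omega

/-- Pivot quality for the combined repeated-step algorithm with groups of 4
(lower medians, then upper medians): the median `m` of `M'` is `≤` at least
`6(j+1)` elements of `S` and `≥` at least `6(j+1)` elements of `S`. -/
theorem pivot_quality_repeated4 (j : ℕ) (k : ℕ) (hk : k = 2 * j + 1)
    (S : Finset ℝ) (hS : S.card = 16 * k)
    (G : Fin (4 * k) → Finset ℝ)
    (hGdisj : ∀ i i' : Fin (4 * k), i ≠ i' → Disjoint (G i) (G i'))
    (hGunion : Finset.univ.biUnion G = S)
    (hGcard : ∀ i, (G i).card = 4)
    (M : Finset ℝ) (hM : M = Finset.image (fun i => kthSmallest (G i) 1) Finset.univ)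
    (H : Fin k → Finset ℝ)
    (hHdisj : ∀ i i' : Fin k, i ≠ i' → Disjoint (H i) (H i'))
    (hHunion : Finset.univ.biUnion H = M)
    (hHcard : ∀ i, (H i).card = 4)
    (M' : Finset ℝ) (hM' : M' = Finset.image (fun i => kthSmallest (H i) 2) Finset.univ)
    (m : ℝ) (hm : m = kthSmallest M' j) :
    6 * (j + 1) ≤ (S.filter (fun x => x ≤ m)).card ∧
    6 * (j + 1) ≤ (S.filter (fun x => m ≤ x)).card :=
  pivot_quality_repeated4_general j k hk S G hGdisj hGunion hGcard M hM H hHdisj hHunion hHcard M'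
    hM' m hm
end
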